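/- Let x be a non-real complex solution of d^{h+1}x^{2h+2} = 1 and set λ = (d/(d+1))·(x + 1/(xd)). Then the vector y = (y_0, y_1, …, y_h) with y_i = ((dx² − x)/(dx² − 1))·x^{i} + ((x − 1)/(dx² − 1))·1/(d^{i} x^{i}) is an eigenvector of R_h with eigenvalue λ. Moreover, the vector f : V(T_h) → ℂ that takes the value y_i at every vertex of level i of the complete d-ary tree T_h is an eigenvector of Q_h with eigenvalue λ. -/
import Mathlib


open Matrix

/-- Vertices of the complete `d`-ary tree of height `h`: words over `{0,…,d-1}`
of length at most `h` (encoded as a level `l ≤ h` together with a word of length `l`). -/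
abbrev Vtx (d h : ℕ) : Type := Σ l : Fin (h + 1), Fin l.val → Fin d

/-- The word (from the root) corresponding to a vertex. -/
def toWord {d h : ℕ} (v : Vtx d h) : List (Fin d) := List.ofFn v.2

/-- The level of a vertex, i.e. its distance from the root. -/
def lvl {d h : ℕ} (v : Vtx d h) : ℕ := v.1.val

/-- Adjacency in the tree: one vertex is obtained from the other by appending one letter. -/
def adj {d h : ℕ} (v w : Vtx d h) : Prop :=
  (∃ a : Fin d, toWord w = toWord v ++ [a]) ∨ ∃ a : Fin d, toWord v = toWord w ++ [a]

-- The transition matrix of the simple random walk on the complete `d`-ary tree of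
-- height `h`: probability `1/(d+1)` along each edge, holding probability `1/(d+1)` at the
-- root and `d/(d+1)` at each leaf.
open scoped Classical in
noncomputable def Q (d h : ℕ) : Matrix (Vtx d h) (Vtx d h) ℂ := fun v w =>
  if adj v w then 1 / (d + 1)
  else if v = w ∧ lvl v = 0 then 1 / (d + 1)
  else if v = w ∧ lvl v = h then (d : ℂ) / (d + 1)
  else 0

/-- `inSub v c w` means that `w` belongs to the complete subtree `T_c^v` rooted at the
child of `v` labelled `c`. -/
def inSub {d h : ℕ} (v : Vtx d h) (c : Fin d) (w : Vtx d h) : Prop :=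
  (toWord v ++ [c]) <+: toWord w

/-- The projection of the walk onto the distance from the root: the birth-death chain
on {0,…,h} with R(0,0)=1/(d+1), R(0,1)=d/(d+1), R(l,l−1)=1/(d+1), R(l,l+1)=d/(d+1) for
1 ≤ l ≤ h−1, R(h,h−1)=1/(d+1), R(h,h)=d/(d+1). -/
noncomputable def R (d h : ℕ) : Matrix (Fin (h + 1)) (Fin (h + 1)) ℂ := fun l m =>
  if (m : ℕ) = (l : ℕ) + 1 then (d : ℂ) / (d + 1)
  else if (l : ℕ) = (m : ℕ) + 1 then 1 / (d + 1)
  else if l = m ∧ (l : ℕ) = 0 then 1 / (d + 1)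
  else if l = m ∧ (l : ℕ) = h then (d : ℂ) / (d + 1)
  else 0

/-- The level-`i` value of the completely symmetric eigenvector. -/
noncomputable def ysym (d : ℕ) (x : ℂ) (i : ℕ) : ℂ :=
  ((d * x ^ 2 - x) / (d * x ^ 2 - 1)) * x ^ i
    + ((x - 1) / (d * x ^ 2 - 1)) * (1 / ((d : ℂ) ^ i * x ^ i))

/-- The corresponding completely symmetric vector on the tree. -/
noncomputable def fsym (d h : ℕ) (x : ℂ) : Vtx d h → ℂ := fun v => ysym d x (lvl v)

/-! ### Auxiliary scalar lemmas -/

noncomputable def zf (d : ℕ) (x : ℂ) (i : ℕ) : ℂ :=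
  ((d : ℂ) * x ^ 2 - x) * x ^ i + (x - 1) * ((x * d)⁻¹) ^ i

section scalar
variable (d : ℕ) (x : ℂ)

lemma hd1' : ((d : ℂ) + 1) ≠ 0 := by
  have : ((d:ℂ) + 1) = ((d+1 : ℕ) : ℂ) := by push_cast; ring
  rw [this]; exact_mod_cast Nat.succ_ne_zero d

lemma hden' (hx : x.im ≠ 0) : (d : ℂ) * x ^ 2 - 1 ≠ 0 := by
  intro hcon
  have h1 : (d : ℂ) * x ^ 2 = 1 := by linear_combination hcon
  have hre : (d : ℝ) * (x.re^2 - x.im^2) = 1 := by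
    have := congrArg Complex.re h1
    simpa [Complex.mul_re, Complex.mul_im, pow_two] using this
  have him : (d : ℝ) * (x.re * x.im + x.im * x.re) = 0 := by
    have := congrArg Complex.im h1
    simpa [Complex.mul_im, pow_two] using this
  have hd0 : 0 ≤ (d : ℝ) := Nat.cast_nonneg d
  have hdR : 0 < (d : ℝ) := by
    rcases hd0.lt_or_eq with hlt | heq
    · exact hlt
    · rw [← heq] at hre; simp at hre
  have hre0 : x.re = 0 := by
    rcases mul_eq_zero.mp him with hc | hc
    · exact absurd hc (ne_of_gt hdR)
    · have : x.re * x.im = 0 := by linarith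
      rcases mul_eq_zero.mp this with h' | h'
      · exact h'
      · exact absurd h' hx
  have him2 : 0 < x.im^2 := by positivity
  rw [hre0] at hre
  nlinarith [him2]

lemma ysym_eq (i : ℕ) : ysym d x i = ((d:ℂ) * x ^ 2 - 1)⁻¹ * zf d x i := by
  have h1 : (1 : ℂ) / ((d : ℂ) ^ i * x ^ i) = ((x * d)⁻¹) ^ i := by
    rw [one_div, ← mul_pow, ← inv_pow, mul_comm]
  simp only [ysym, zf, h1]; ring

lemma keyz (hx0 : x ≠ 0) (hd0 : (d:ℂ) ≠ 0) (k : ℕ) :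
    zf d x k + d * zf d x (k+2) = ((d:ℂ) * x + (d:ℂ) * (x*d)⁻¹) * zf d x (k+1) := by
  have hu : (x * (d:ℂ))⁻¹ * (x * d) = 1 := inv_mul_cancel₀ (mul_ne_zero hx0 hd0)
  simp only [zf]
  linear_combination (-(((d:ℂ)*x^2 - x)*x^k + (x-1)*((x*(d:ℂ))⁻¹)^k)) * hu

lemma bdry0z (hx0 : x ≠ 0) (hd0 : (d:ℂ) ≠ 0) :
    zf d x 0 + d * zf d x 1 = ((d:ℂ) * x + (d:ℂ) * (x*d)⁻¹) * zf d x 0 := by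
  have hu : (x * (d:ℂ))⁻¹ * (x * d) = 1 := inv_mul_cancel₀ (mul_ne_zero hx0 hd0)
  simp only [zf]
  linear_combination (1 - (d:ℂ)*x) * hu

lemma topz (h : ℕ) (hx0 : x ≠ 0) (hd0 : (d:ℂ) ≠ 0)
    (hsol : (d : ℂ) ^ (h + 1) * x ^ (2 * h + 2) = 1) :
    zf d x (h+1) = zf d x h := by
  have hu : (x * (d:ℂ))⁻¹ * (x * d) = 1 := inv_mul_cancel₀ (mul_ne_zero hx0 hd0)
  have hu2 : ((x * (d:ℂ))⁻¹ * (x * d)) ^ (h+1) = 1 := by rw [hu, one_pow]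
  have hs2 : (d:ℂ) ^ (h+1) * (x ^ (h+1) * x ^ (h+1)) = 1 := by
    rw [← hsol]; congr 1; rw [← pow_add]; congr 1; ring
  simp only [zf]
  linear_combination (x-1)*((d:ℂ)*x-1)*(((x*(d:ℂ))⁻¹)^(h+1))*hs2
    - (x-1)*((d:ℂ)*x-1)*x^(h+1)*hu2 + (x-1)*(((x*(d:ℂ))⁻¹)^h)*hu

lemma ysym_zero (hx : x.im ≠ 0) : ysym d x 0 = 1 := by
  rw [ysym_eq]
  have : zf d x 0 = (d:ℂ) * x ^ 2 - 1 := by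
    simp only [zf, pow_zero, mul_one]; ring
  rw [this, inv_mul_cancel₀ (hden' d x hx)]

lemma eig_mid (hx : x.im ≠ 0) (hx0 : x ≠ 0) (hd0 : (d:ℂ) ≠ 0) (k : ℕ) :
    1/((d:ℂ)+1) * ysym d x k + (d:ℂ)/((d:ℂ)+1) * ysym d x (k+2)
      = (((d:ℂ)/((d:ℂ)+1)) * (x + 1/(x*d))) * ysym d x (k+1) := by
  rw [ysym_eq, ysym_eq, ysym_eq]
  linear_combination (((d:ℂ)+1)⁻¹ * ((d:ℂ)*x^2-1)⁻¹) * keyz d x hx0 hd0 k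

lemma eig_zero (hx : x.im ≠ 0) (hx0 : x ≠ 0) (hd0 : (d:ℂ) ≠ 0) :
    1/((d:ℂ)+1) * ysym d x 0 + (d:ℂ)/((d:ℂ)+1) * ysym d x 1
      = (((d:ℂ)/((d:ℂ)+1)) * (x + 1/(x*d))) * ysym d x 0 := by
  rw [ysym_eq, ysym_eq]
  linear_combination (((d:ℂ)+1)⁻¹ * ((d:ℂ)*x^2-1)⁻¹) * bdry0z d x hx0 hd0

lemma eig_top (hx : x.im ≠ 0) (hx0 : x ≠ 0) (hd0 : (d:ℂ) ≠ 0) (k : ℕ)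
    (hsol : (d : ℂ) ^ ((k+1) + 1) * x ^ (2 * (k+1) + 2) = 1) :
    1/((d:ℂ)+1) * ysym d x k + (d:ℂ)/((d:ℂ)+1) * ysym d x (k+1)
      = (((d:ℂ)/((d:ℂ)+1)) * (x + 1/(x*d))) * ysym d x (k+1) := by
  have ht : zf d x (k+2) = zf d x (k+1) := topz d x (k+1) hx0 hd0 hsol
  rw [ysym_eq, ysym_eq]
  linear_combination (((d:ℂ)+1)⁻¹ * ((d:ℂ)*x^2-1)⁻¹) * keyz d x hx0 hd0 k
    - ((d:ℂ) * ((d:ℂ)+1)⁻¹ * ((d:ℂ)*x^2-1)⁻¹) * ht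

end scalar

/-! ### Tree lemmas -/

section tree
variable {d h : ℕ}

lemma mk_eq_iff {l : Fin (h+1)} (s t : Fin (l:ℕ) → Fin d) :
    (⟨l, s⟩ : Vtx d h) = ⟨l, t⟩ ↔ s = t := by
  constructor
  · intro he
    exact eq_of_heq (Sigma.mk.inj_iff.mp he).2
  · rintro rfl; rfl

lemma mk_ne {l m : Fin (h+1)} (hne : (l:ℕ) ≠ (m:ℕ)) (s : Fin (l:ℕ) → Fin d)
    (t : Fin (m:ℕ) → Fin d) : (⟨l,s⟩ : Vtx d h) ≠ ⟨m,t⟩ := by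
  intro he
  exact hne (congrArg (fun v : Vtx d h => (v.1 : ℕ)) he)

lemma sum_child {l m : Fin (h+1)} (hm : (m:ℕ) = (l:ℕ) + 1)
    (s : Fin (l:ℕ) → Fin d) :
    ∑ t : Fin (m:ℕ) → Fin d, Q d h ⟨l,s⟩ ⟨m,t⟩ = (d:ℂ)/((d:ℂ)+1) := by
  set e : Fin d → (Fin (m:ℕ) → Fin d) := fun a i =>
    if hi : (i:ℕ) < (l:ℕ) then s ⟨i, hi⟩ else a with he
  have hofn : ∀ a, List.ofFn (e a) = List.ofFn s ++ [a] := by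
    intro a
    apply List.ext_getElem
    · simp [hm]
    · intro i h1 h2
      simp only [List.length_ofFn] at h1
      rcases lt_or_ge i (l:ℕ) with hi | hi
      · rw [List.getElem_ofFn, List.getElem_append_left (by simpa using hi)]
        simp [he, hi]
      · have hiL : i = (l:ℕ) := by omega
        subst hiL
        rw [List.getElem_ofFn, List.getElem_append_right (by simp)]
        simp [he]
  have hchar : ∀ t : Fin (m:ℕ) → Fin d,
      adj (⟨l,s⟩ : Vtx d h) ⟨m,t⟩ ↔ ∃ a, t = e a := by
    intro t
    constructor
    · rintro (⟨a, ha⟩ | ⟨a, ha⟩)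
      · refine ⟨a, List.ofFn_injective ?_⟩
        rw [hofn a]
        simpa [toWord] using ha
      · exfalso
        have := congrArg List.length ha
        simp [toWord, hm] at this
        omega
    · rintro ⟨a, rfl⟩
      exact Or.inl ⟨a, by simpa [toWord] using hofn a⟩
  have hQ : ∀ t : Fin (m:ℕ) → Fin d,
      Q d h ⟨l,s⟩ ⟨m,t⟩ = if (∃ a, t = e a) then 1/((d:ℂ)+1) else 0 := by
    intro t
    have hne := mk_ne (show (l:ℕ) ≠ (m:ℕ) by omega) s t
    by_cases hadj : adj (⟨l,s⟩ : Vtx d h) ⟨m,t⟩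
    · rw [Q, if_pos hadj, if_pos ((hchar t).mp hadj)]
    · rw [Q, if_neg hadj, if_neg (fun hc => hne hc.1), if_neg (fun hc => hne hc.1),
        if_neg (fun hc => hadj ((hchar t).mpr hc))]
  have hinj : Function.Injective e := by
    intro a b hab
    have := congrFun hab ⟨(l:ℕ), by omega⟩
    simpa [he] using this
  have hcard : (Finset.univ.filter (fun t => ∃ a, t = e a))
      = Finset.image e Finset.univ := by
    ext t
    simp [eq_comm]
  calc ∑ t : Fin (m:ℕ) → Fin d, Q d h ⟨l,s⟩ ⟨m,t⟩
      = ∑ t ∈ Finset.univ.filter (fun t => ∃ a, t = e a), (1/((d:ℂ)+1)) := by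
        rw [Finset.sum_filter]
        exact Finset.sum_congr rfl fun t _ => by rw [hQ t]
    _ = (Finset.univ.filter (fun t => ∃ a, t = e a)).card • (1/((d:ℂ)+1)) :=
        Finset.sum_const _
    _ = (d:ℂ)/((d:ℂ)+1) := by
        rw [hcard, Finset.card_image_of_injective _ hinj]
        simp [nsmul_eq_mul, div_eq_mul_inv]

lemma sum_parent {l m : Fin (h+1)} (hm : (l:ℕ) = (m:ℕ) + 1)
    (s : Fin (l:ℕ) → Fin d) :
    ∑ t : Fin (m:ℕ) → Fin d, Q d h ⟨l,s⟩ ⟨m,t⟩ = 1/((d:ℂ)+1) := by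
  set t0 : Fin (m:ℕ) → Fin d := fun i => s ⟨i, by omega⟩ with ht0
  have hofn : List.ofFn s = List.ofFn t0 ++ [s ⟨(m:ℕ), by omega⟩] := by
    apply List.ext_getElem
    · simp [hm]
    · intro i h1 h2
      simp only [List.length_ofFn] at h1
      rcases lt_or_ge i (m:ℕ) with hi | hi
      · rw [List.getElem_ofFn, List.getElem_append_left (by simpa using hi)]
        simp [ht0]
      · have hiM : i = (m:ℕ) := by omega
        subst hiM
        rw [List.getElem_ofFn, List.getElem_append_right (by simp)]
        simp
  have hchar : ∀ t : Fin (m:ℕ) → Fin d,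
      adj (⟨l,s⟩ : Vtx d h) ⟨m,t⟩ ↔ t = t0 := by
    intro t
    constructor
    · rintro (⟨a, ha⟩ | ⟨a, ha⟩)
      · exfalso
        have := congrArg List.length ha
        simp [toWord, hm] at this
        omega
      · have ha' : List.ofFn t ++ [a] = List.ofFn t0 ++ [s ⟨(m:ℕ), by omega⟩] := by
          rw [← hofn]; simpa [toWord] using ha.symm
        have := (List.append_inj' ha' rfl).1
        exact List.ofFn_injective this
    · rintro rfl
      exact Or.inr ⟨s ⟨(m:ℕ), by omega⟩, by simpa [toWord] using hofn⟩
  have hQ : ∀ t : Fin (m:ℕ) → Fin d,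
      Q d h ⟨l,s⟩ ⟨m,t⟩ = if t = t0 then 1/((d:ℂ)+1) else 0 := by
    intro t
    have hne := mk_ne (show (l:ℕ) ≠ (m:ℕ) by omega) s t
    by_cases hadj : adj (⟨l,s⟩ : Vtx d h) ⟨m,t⟩
    · rw [Q, if_pos hadj, if_pos ((hchar t).mp hadj)]
    · rw [Q, if_neg hadj, if_neg (fun hc => hne hc.1), if_neg (fun hc => hne hc.1),
        if_neg (fun hc => hadj ((hchar t).mpr hc))]
  rw [Finset.sum_congr rfl (fun t _ => hQ t)]
  simp

lemma sum_diag (l : Fin (h+1)) (s : Fin (l:ℕ) → Fin d) :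
    ∑ t : Fin (l:ℕ) → Fin d, Q d h ⟨l,s⟩ ⟨l,t⟩
      = if (l:ℕ) = 0 then 1/((d:ℂ)+1) else if (l:ℕ) = h then (d:ℂ)/((d:ℂ)+1) else 0 := by
  have hadj : ∀ t : Fin (l:ℕ) → Fin d, ¬ adj (⟨l,s⟩ : Vtx d h) ⟨l,t⟩ := by
    rintro t (⟨a, ha⟩ | ⟨a, ha⟩) <;>
    · have := congrArg List.length ha
      simp [toWord] at this
  have hQ : ∀ t : Fin (l:ℕ) → Fin d,
      Q d h ⟨l,s⟩ ⟨l,t⟩ = if t = s then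
        (if (l:ℕ) = 0 then 1/((d:ℂ)+1) else if (l:ℕ) = h then (d:ℂ)/((d:ℂ)+1) else 0)
        else 0 := by
    intro t
    by_cases hts : t = s
    · subst hts
      rw [Q, if_neg (hadj t), if_pos rfl]
      by_cases h0 : (l:ℕ) = 0
      · rw [if_pos ⟨rfl, h0⟩, if_pos h0]
      · rw [if_neg (fun hc => h0 hc.2), if_neg h0]
        by_cases hH : (l:ℕ) = h
        · rw [if_pos ⟨rfl, hH⟩, if_pos hH]
        · rw [if_neg (fun hc => hH hc.2), if_neg hH]
    · have hne : (⟨l,s⟩ : Vtx d h) ≠ ⟨l,t⟩ := by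
        rw [Ne, mk_eq_iff]
        exact fun hc => hts hc.symm
      rw [Q, if_neg (hadj t), if_neg (fun hc => hne hc.1), if_neg (fun hc => hne hc.1),
        if_neg hts]
  rw [Finset.sum_congr rfl (fun t _ => hQ t)]
  simp

lemma sum_far {l m : Fin (h+1)} (h1 : (m:ℕ) ≠ (l:ℕ) + 1) (h2 : (l:ℕ) ≠ (m:ℕ) + 1)
    (h3 : (m:ℕ) ≠ (l:ℕ)) (s : Fin (l:ℕ) → Fin d) :
    ∑ t : Fin (m:ℕ) → Fin d, Q d h ⟨l,s⟩ ⟨m,t⟩ = 0 := by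
  have hQ : ∀ t : Fin (m:ℕ) → Fin d, Q d h ⟨l,s⟩ ⟨m,t⟩ = 0 := by
    intro t
    have hne := mk_ne (fun hc => h3 hc.symm) s t
    have hadj : ¬ adj (⟨l,s⟩ : Vtx d h) ⟨m,t⟩ := by
      rintro (⟨a, ha⟩ | ⟨a, ha⟩) <;>
      · have := congrArg List.length ha
        simp [toWord] at this
        omega
    rw [Q, if_neg hadj, if_neg (fun hc => hne hc.1), if_neg (fun hc => hne hc.1)]
  rw [Finset.sum_congr rfl (fun t _ => hQ t), Finset.sum_const, smul_zero]

lemma rowsum (l m : Fin (h+1)) (s : Fin (l:ℕ) → Fin d) :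
    ∑ t : Fin (m:ℕ) → Fin d, Q d h ⟨l,s⟩ ⟨m,t⟩ = R d h l m := by
  rcases eq_or_ne ((m:ℕ)) ((l:ℕ)+1) with hm1 | hm1
  · rw [sum_child hm1, R, if_pos hm1]
  rcases eq_or_ne ((l:ℕ)) ((m:ℕ)+1) with hm2 | hm2
  · rw [sum_parent hm2, R, if_neg hm1, if_pos hm2]
  rcases eq_or_ne ((m:ℕ)) ((l:ℕ)) with hm3 | hm3
  · have hml : m = l := Fin.ext hm3
    subst hml
    rw [sum_diag m s, R, if_neg hm1, if_neg hm2]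
    by_cases h0 : (m:ℕ) = 0
    · rw [if_pos h0, if_pos ⟨rfl, h0⟩]
    · by_cases hH : (m:ℕ) = h
      · rw [if_neg h0, if_pos hH, if_neg (fun hc : m = m ∧ (m:ℕ) = 0 => h0 hc.2),
          if_pos ⟨rfl, hH⟩]
      · rw [if_neg h0, if_neg hH, if_neg (fun hc : m = m ∧ (m:ℕ) = 0 => h0 hc.2),
          if_neg (fun hc : m = m ∧ (m:ℕ) = h => hH hc.2)]
  · rw [sum_far hm1 hm2 hm3, R, if_neg hm1, if_neg hm2,
      if_neg (fun hc => hm3 (by rw [hc.1])), if_neg (fun hc => hm3 (by rw [hc.1]))]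

end tree

/-! ### Two-point sums -/

lemma sum_two {ι : Type*} [Fintype ι] [DecidableEq ι] (f : ι → ℂ) (i j : ι) (hij : i ≠ j)
    (h0 : ∀ k, k ≠ i → k ≠ j → f k = 0) : ∑ k, f k = f i + f j := by
  have hsplit : ∀ k, f k = (if k = i then f i else 0) + (if k = j then f j else 0) := by
    intro k
    by_cases hki : k = i
    · subst hki; simp [hij]
    · by_cases hkj : k = j
      · subst hkj; simp [hki]
      · simp [hki, hkj, h0 k hki hkj]
  rw [Finset.sum_congr rfl (fun k _ => hsplit k), Finset.sum_add_distrib]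
  simp

/-- For a non-real solution x of dʰ⁺¹x²ʰ⁺² = 1 and λ = (d/(d+1))(x + 1/(xd)), the
vector `(ysym d x 0, …, ysym d x h)` is an eigenvector of R_h with eigenvalue λ, and its
lift to the tree is an eigenvector of Q_h with eigenvalue λ. -/
theorem stmt_9 (d h : ℕ) (hd : 2 ≤ d) (hh : 1 ≤ h) (x : ℂ) (hx : x.im ≠ 0)
    (hsol : (d : ℂ) ^ (h + 1) * x ^ (2 * h + 2) = 1) :
    (fun i : Fin (h + 1) => ysym d x (i : ℕ)) ≠ 0 ∧
    (R d h).mulVec (fun i : Fin (h + 1) => ysym d x (i : ℕ))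
      = (((d : ℂ) / (d + 1)) * (x + 1 / (x * d)))
          • (fun i : Fin (h + 1) => ysym d x (i : ℕ)) ∧
    fsym d h x ≠ 0 ∧
    (Q d h).mulVec (fsym d h x)
      = (((d : ℂ) / (d + 1)) * (x + 1 / (x * d))) • fsym d h x := by
  have hx0 : x ≠ 0 := by
    rintro rfl
    rw [zero_pow (by omega : 2*h+2 ≠ 0), mul_zero] at hsol
    exact zero_ne_one hsol
  have hd0 : (d:ℂ) ≠ 0 := by
    exact_mod_cast (show (d:ℕ) ≠ 0 by omega)
  set lam : ℂ := ((d : ℂ) / (d + 1)) * (x + 1 / (x * d)) with hlam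
  set y : Fin (h+1) → ℂ := fun i : Fin (h + 1) => ysym d x (i : ℕ) with hy
  -- the R eigen equation
  have hR : (R d h).mulVec y = lam • y := by
    funext l
    have hsum : (R d h).mulVec y l = ∑ m, R d h l m * y m := by
      simp [Matrix.mulVec, dotProduct]
    rw [hsum]
    by_cases hl0 : (l:ℕ) = 0
    · have hRa : R d h l ⟨0, by omega⟩ = 1/((d:ℂ)+1) := by
        rw [R, if_neg (by simp [hl0]), if_neg (by simp [hl0]),
          if_pos ⟨Fin.ext (by simp [hl0]), hl0⟩]
      have hRb : R d h l ⟨1, by omega⟩ = (d:ℂ)/((d:ℂ)+1) := by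
        rw [R, if_pos (by simp [hl0])]
      rw [sum_two _ ⟨0, by omega⟩ ⟨1, by omega⟩ (by simp [Fin.ext_iff])
        (fun k hk1 hk2 => ?_), hRa, hRb]
      · show 1/((d:ℂ)+1) * ysym d x 0 + (d:ℂ)/((d:ℂ)+1) * ysym d x 1 = _
        have : y l = ysym d x 0 := by rw [hy]; simp [hl0]
        rw [Pi.smul_apply, this, smul_eq_mul]
        exact eig_zero d x hx hx0 hd0
      · have hk1' : (k:ℕ) ≠ 0 := fun hc => hk1 (Fin.ext (by simpa using hc))
        have hk2' : (k:ℕ) ≠ 1 := fun hc => hk2 (Fin.ext (by simpa using hc))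
        have : R d h l k = 0 := by
          rw [R, if_neg (by omega), if_neg (by omega),
            if_neg (fun hc => hk1' (by rw [← hc.1, hl0])),
            if_neg (fun hc => by rw [← hc.1] at hc; omega)]
        rw [this, zero_mul]
    · by_cases hlh : (l:ℕ) = h
      · obtain ⟨k, hk⟩ : ∃ k, h = k + 1 := ⟨h - 1, by omega⟩
        have hRa : R d h l ⟨k, by omega⟩ = 1/((d:ℂ)+1) := by
          rw [R, if_neg (by simp; omega), if_pos (by simp; omega)]
        have hRb : R d h l ⟨k+1, by omega⟩ = (d:ℂ)/((d:ℂ)+1) := by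
          rw [R, if_neg (by simp; omega), if_neg (by simp; omega),
            if_neg (fun hc => by omega),
            if_pos ⟨Fin.ext (by simp; omega), hlh⟩]
        rw [sum_two _ ⟨k, by omega⟩ ⟨k+1, by omega⟩ (by simp [Fin.ext_iff])
          (fun j hj1 hj2 => ?_), hRa, hRb]
        · show 1/((d:ℂ)+1) * ysym d x k + (d:ℂ)/((d:ℂ)+1) * ysym d x (k+1) = _
          have hyl : y l = ysym d x (k+1) := by rw [hy]; simp; rw [hlh, hk]
          rw [Pi.smul_apply, hyl, smul_eq_mul]
          exact eig_top d x hx hx0 hd0 k (by rw [← hk]; exact hsol)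
        · have hj1' : (j:ℕ) ≠ k := fun hc => hj1 (Fin.ext (by simpa using hc))
          have hj2' : (j:ℕ) ≠ k+1 := fun hc => hj2 (Fin.ext (by simpa using hc))
          have hjlt : (j:ℕ) < h + 1 := j.isLt
          have : R d h l j = 0 := by
            rw [R, if_neg (by omega), if_neg (by omega),
              if_neg (fun hc => by rw [← hc.1] at hc; omega),
              if_neg (fun hc => by have := congrArg Fin.val hc.1; omega)]
          rw [this, zero_mul]
      · obtain ⟨k, hk⟩ : ∃ k, (l:ℕ) = k + 1 := ⟨(l:ℕ) - 1, by omega⟩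
        have hkh : k + 1 < h := by
          have := l.isLt; omega
        have hRa : R d h l ⟨k, by omega⟩ = 1/((d:ℂ)+1) := by
          rw [R, if_neg (by simp; omega), if_pos (by simp; omega)]
        have hRb : R d h l ⟨k+2, by omega⟩ = (d:ℂ)/((d:ℂ)+1) := by
          rw [R, if_pos (by simp; omega)]
        rw [sum_two _ ⟨k, by omega⟩ ⟨k+2, by omega⟩ (by simp [Fin.ext_iff])
          (fun j hj1 hj2 => ?_), hRa, hRb]
        · show 1/((d:ℂ)+1) * ysym d x k + (d:ℂ)/((d:ℂ)+1) * ysym d x (k+2) = _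
          have hyl : y l = ysym d x (k+1) := by rw [hy]; simp; rw [hk]
          rw [Pi.smul_apply, hyl, smul_eq_mul]
          exact eig_mid d x hx hx0 hd0 k
        · have hj1' : (j:ℕ) ≠ k := fun hc => hj1 (Fin.ext (by simpa using hc))
          have hj2' : (j:ℕ) ≠ k+2 := fun hc => hj2 (Fin.ext (by simpa using hc))
          have : R d h l j = 0 := by
            rw [R, if_neg (by omega), if_neg (by omega),
              if_neg (fun hc => by have := congrArg Fin.val hc.1; omega),
              if_neg (fun hc => by have := congrArg Fin.val hc.1; omega)]
          rw [this, zero_mul]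
  -- nonvanishing
  have hy1 : y ⟨0, by omega⟩ = 1 := by
    rw [hy]; simpa using ysym_zero d x hx
  have hyne : y ≠ 0 := by
    intro hc
    have := congrFun hc ⟨0, by omega⟩
    rw [hy1] at this
    exact one_ne_zero this
  have hfne : fsym d h x ≠ 0 := by
    intro hc
    have := congrFun hc ⟨⟨0, by omega⟩, Fin.elim0⟩
    have h1 : fsym d h x ⟨⟨0, by omega⟩, Fin.elim0⟩ = 1 := by
      show ysym d x 0 = 1
      exact ysym_zero d x hx
    rw [h1] at this
    exact one_ne_zero this
  -- the Q eigen equation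
  have hQmv : (Q d h).mulVec (fsym d h x) = lam • fsym d h x := by
    funext v
    obtain ⟨l, s⟩ := v
    have hsum : (Q d h).mulVec (fsym d h x) ⟨l, s⟩
        = ∑ w : Vtx d h, Q d h ⟨l,s⟩ w * fsym d h x w := by
      simp [Matrix.mulVec, dotProduct]
    rw [hsum, ← Finset.univ_sigma_univ, Finset.sum_sigma]
    have hinner : ∀ m : Fin (h+1),
        ∑ t : Fin (m:ℕ) → Fin d, Q d h ⟨l,s⟩ ⟨m,t⟩ * fsym d h x ⟨m,t⟩
          = R d h l m * y m := by
      intro m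
      have : ∀ t : Fin (m:ℕ) → Fin d,
          Q d h ⟨l,s⟩ ⟨m,t⟩ * fsym d h x ⟨m,t⟩ = Q d h ⟨l,s⟩ ⟨m,t⟩ * y m := by
        intro t; rfl
      rw [Finset.sum_congr rfl (fun t _ => this t), ← Finset.sum_mul, rowsum l m s]
    rw [Finset.sum_congr rfl (fun m _ => hinner m)]
    have : ∑ m, R d h l m * y m = (R d h).mulVec y l := by
      simp [Matrix.mulVec, dotProduct]
    rw [this, hR]
    show lam * y l = lam * fsym d h x ⟨l, s⟩
    rfl
  exact ⟨hyne, hR, hfne, hQmv⟩
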